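/- arXiv:1905.13513 — 2 statements merged into one kernel-verified Lean document; each statement's English description precedes it below -/
import Mathlib

section
/- Let W, Q be finite-dimensional real inner product spaces, A : W → W symmetric positive definite, B : W → Q linear. Then for all (w,p), (r,q) ∈ W × Q: ⟨Aw, r⟩ + ⟨Bᵀp, r⟩ + ⟨A^{-1}Bᵀp, Bᵀq⟩ ≤ (‖w‖_A² + 2‖Bᵀp‖²_{A^{-1}})^{1/2} · (2‖r‖_A² + ‖Bᵀq‖²_{A^{-1}})^{1/2}, where ‖w‖_A² = ⟨Aw,w⟩ and ‖v‖²_{A^{-1}} = ⟨A^{-1}v,v⟩. -/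
/-!
Writing `Bᵀp = A x` and `Bᵀq = A y`, all three terms are values of the energy form `⟪A ·, ·⟫`
and `‖Bᵀp‖_{A⁻¹} = ‖x‖_A`. Bounding each term by Cauchy–Schwarz for that form leaves
`ac + bc + bd`, the dot product of `(a, b, b)` and `(c, c, d)` in `ℝ³`.
-/

open RealInnerProductSpace

theorem mul_add_mul_add_mul_le_sqrt_mul_sqrt (a b c d : ℝ) :
    a * c + b * c + b * d ≤ √(a ^ 2 + 2 * b ^ 2) * √(2 * c ^ 2 + d ^ 2) := by
  rw [← Real.sqrt_mul (by positivity)]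
  refine (le_abs_self _).trans (Real.abs_le_sqrt ?_)
  nlinarith [sq_nonneg (a * c - b * d), sq_nonneg (a * d - b * c), sq_nonneg (a * c - b * c),
    sq_nonneg (b * c - b * d)]

namespace LinearMap.IsPositive

variable {W : Type*} [NormedAddCommGroup W] [InnerProductSpace ℝ W] {A : W →ₗ[ℝ] W}

theorem real_inner_map_le_sqrt_mul_sqrt (hA : A.IsPositive) (u v : W) :
    ⟪A u, v⟫ ≤ √⟪A u, u⟫ * √⟪A v, v⟫ := by
  let energy : LinearMap.BilinForm ℝ W := (innerₗ W).comp A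
  have hsq : ⟪A u, v⟫ ^ 2 ≤ ⟪A u, u⟫ * ⟪A v, v⟫ :=
    energy.apply_sq_le_of_symm hA.inner_nonneg_left ⟨fun x y => by
      change ⟪A x, y⟫ = ⟪A y, x⟫
      rw [hA.isSymmetric, real_inner_comm]⟩ u v
  rw [← Real.sqrt_mul (hA.inner_nonneg_left u)]
  exact (le_abs_self _).trans (Real.abs_le_sqrt hsq)

theorem real_inner_add_add_le (hA : A.IsPositive) (w x r y : W) :
    ⟪A w, r⟫ + ⟪A x, r⟫ + ⟪A x, y⟫ ≤
      √(⟪A w, w⟫ + 2 * ⟪A x, x⟫) * √(2 * ⟪A r, r⟫ + ⟪A y, y⟫) := by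
  have hsq (v : W) : √⟪A v, v⟫ ^ 2 = ⟪A v, v⟫ := Real.sq_sqrt (hA.inner_nonneg_left v)
  calc ⟪A w, r⟫ + ⟪A x, r⟫ + ⟪A x, y⟫
      ≤ √⟪A w, w⟫ * √⟪A r, r⟫ + √⟪A x, x⟫ * √⟪A r, r⟫ + √⟪A x, x⟫ * √⟪A y, y⟫ := by
        gcongr <;> exact hA.real_inner_map_le_sqrt_mul_sqrt _ _
    _ ≤ _ := by
        simpa only [hsq] using mul_add_mul_add_mul_le_sqrt_mul_sqrt
          √⟪A w, w⟫ √⟪A x, x⟫ √⟪A r, r⟫ √⟪A y, y⟫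

end LinearMap.IsPositive

theorem stmt_7_general {W Q : Type*}
    [NormedAddCommGroup W] [InnerProductSpace ℝ W]
    [NormedAddCommGroup Q] [InnerProductSpace ℝ Q]
    (A Ainv : W →ₗ[ℝ] W)
    (hAsym : ∀ u v : W, ⟪A u, v⟫ = ⟪u, A v⟫)
    (hApos : ∀ v : W, v ≠ 0 → 0 < ⟪A v, v⟫)
    (hAinv : ∀ v : W, A (Ainv v) = v)
    (Bt : Q →ₗ[ℝ] W) :
    ∀ (w r : W) (p q : Q),
      ⟪A w, r⟫ + ⟪Bt p, r⟫ + ⟪Ainv (Bt p), Bt q⟫ ≤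
        Real.sqrt (⟪A w, w⟫ + 2 * ⟪Ainv (Bt p), Bt p⟫) *
          Real.sqrt (2 * ⟪A r, r⟫ + ⟪Ainv (Bt q), Bt q⟫) := by
  have hA : A.IsPositive := (A.isPositive_iff).mpr ⟨hAsym, fun v => by
    rcases eq_or_ne v 0 with rfl | hv
    · simp
    · exact (hApos v hv).le⟩
  intro w r p q
  generalize hx : Ainv (Bt p) = x
  generalize hy : Ainv (Bt q) = y
  rw [← hAinv (Bt p), ← hAinv (Bt q), hx, hy, ← hAsym,
    real_inner_comm (A x), real_inner_comm (A y)]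
  exact hA.real_inner_add_add_le w x r y

/-- Boundedness of the field of values of the block lower triangular
preconditioned operator. -/
theorem stmt_7 {W Q : Type*}
    [NormedAddCommGroup W] [InnerProductSpace ℝ W] [FiniteDimensional ℝ W]
    [NormedAddCommGroup Q] [InnerProductSpace ℝ Q] [FiniteDimensional ℝ Q]
    (A Ainv : W →ₗ[ℝ] W)
    (hAsym : ∀ u v : W, ⟪A u, v⟫ = ⟪u, A v⟫)
    (hApos : ∀ v : W, v ≠ 0 → 0 < ⟪A v, v⟫)
    (hAinv : ∀ v : W, A (Ainv v) = v)
    (B : W →ₗ[ℝ] Q) (Bt : Q →ₗ[ℝ] W)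
    (hadj : ∀ (w : W) (q : Q), ⟪B w, q⟫ = ⟪w, Bt q⟫) :
    ∀ (w r : W) (p q : Q),
      ⟪A w, r⟫ + ⟪Bt p, r⟫ + ⟪Ainv (Bt p), Bt q⟫ ≤
        Real.sqrt (⟪A w, w⟫ + 2 * ⟪Ainv (Bt p), Bt p⟫) *
          Real.sqrt (2 * ⟪A r, r⟫ + ⟪Ainv (Bt q), Bt q⟫) :=
  stmt_7_general A Ainv hAsym hApos hAinv Bt
end

section
/- Let X be a finite-dimensional real vector space with two inner products (·,·)_X and (·,·)_{M^{-1}} whose induced norms satisfy c₁‖x‖²_X ≤ ‖x‖²_{M^{-1}} ≤ c₂‖x‖²_X for all x, with 0 < c₁ ≤ c₂. Let L be a bilinear form on X that is continuous with constant α and satisfies the symmetric inf-sup condition with constant β > 0, both with respect to ‖·‖_X. Then L is continuous with constant α/c₁ and satisfies the inf-sup condition with constant β·c₁/c₂ (up to the appropriate constant factors) with respect to ‖·‖_{M^{-1}}; consequently the operator MA, where ⟨M^{-1}x, y⟩ = (x,y)_{M^{-1}} and ⟨Ax,y⟩ = L(x,y), has condition number κ(MA) ≤ (c₂α)/(c₁β)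 in the M^{-1}-inner product. -/
open RealInnerProductSpace

/-! Norm equivalence `c₁ ‖x‖² ≤ ⟪N x, x⟫ ≤ c₂ ‖x‖²` transports continuity and inf-sup stability of
`L` from `‖·‖_X` to the energy norm `√⟪N x, x⟫`, at the cost of the factors `1/c₁` and `1/c₂`.
Since `⟪N (T x), y⟫ = L x y`, continuity bounds `T` from above (test with `y = T x`), while the
inf-sup condition together with Cauchy–Schwarz for the form `⟪N ·, ·⟫` bounds `T` from below.
The product of the two bounds is the condition number estimate. -/

theorem LinearMap.IsPositive.inner_apply_le_sqrt_mul_sqrt {X : Type*} [NormedAddCommGroup X]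
    [InnerProductSpace ℝ X] {N : X →ₗ[ℝ] X} (hN : N.IsPositive) (x y : X) :
    ⟪N x, y⟫ ≤ √⟪N x, x⟫ * √⟪N y, y⟫ := by
  let B : LinearMap.BilinForm ℝ X := innerₗ X ∘ₗ N
  have hB : LinearMap.IsSymm B := LinearMap.isSymm_def.2 fun x y => by
    simp [B, hN.isSymmetric x y, real_inner_comm]
  rw [← Real.sqrt_mul (hN.inner_nonneg_left x)]
  exact (le_abs_self _).trans
    (Real.abs_le_sqrt (B.apply_sq_le_of_symm hN.inner_nonneg_left hB x y))

theorem Real.sqrt_mul_sq_mul_sqrt_mul_sq {c r s : ℝ} (hc : 0 ≤ c) (hr : 0 ≤ r) (hs : 0 ≤ s) :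
    √(c * r ^ 2) * √(c * s ^ 2) = c * (r * s) := by
  rw [← Real.sqrt_mul (by positivity), show c * r ^ 2 * (c * s ^ 2) = (c * (r * s)) ^ 2 by ring,
    Real.sqrt_sq (by positivity)]

theorem Real.mul_mul_le_sqrt_mul_sqrt {c r s p q : ℝ} (hc : 0 ≤ c) (hr : 0 ≤ r) (hs : 0 ≤ s)
    (hp : c * r ^ 2 ≤ p) (hq : c * s ^ 2 ≤ q) : c * (r * s) ≤ √p * √q := by
  rw [← Real.sqrt_mul_sq_mul_sqrt_mul_sq hc hr hs]
  exact mul_le_mul (Real.sqrt_le_sqrt hp) (Real.sqrt_le_sqrt hq) (Real.sqrt_nonneg _)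
    (Real.sqrt_nonneg _)

theorem Real.sqrt_mul_sqrt_le_mul_mul {c r s p q : ℝ} (hc : 0 ≤ c) (hr : 0 ≤ r) (hs : 0 ≤ s)
    (hp : p ≤ c * r ^ 2) (hq : q ≤ c * s ^ 2) : √p * √q ≤ c * (r * s) := by
  rw [← Real.sqrt_mul_sq_mul_sqrt_mul_sq hc hr hs]
  exact mul_le_mul (Real.sqrt_le_sqrt hp) (Real.sqrt_le_sqrt hq) (Real.sqrt_nonneg _)
    (Real.sqrt_nonneg _)

section EnergyNorm

variable {X : Type*} [NormedAddCommGroup X] [InnerProductSpace ℝ X] {N : X →ₗ[ℝ] X}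

theorem abs_le_div_mul_sqrt_inner_mul_sqrt_inner {B : X → X → ℝ} {α c : ℝ} (hα : 0 ≤ α)
    (hc : 0 < c) (hlow : ∀ x, c * ‖x‖ ^ 2 ≤ ⟪N x, x⟫)
    (hB : ∀ x y, |B x y| ≤ α * ‖x‖ * ‖y‖) (x y : X) :
    |B x y| ≤ α / c * √⟪N x, x⟫ * √⟪N y, y⟫ :=
  calc |B x y| ≤ α * ‖x‖ * ‖y‖ := hB x y
    _ = α / c * (c * (‖x‖ * ‖y‖)) := by field_simp
    _ ≤ α / c * (√⟪N x, x⟫ * √⟪N y, y⟫) := mul_le_mul_of_nonneg_left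
      (Real.mul_mul_le_sqrt_mul_sqrt hc.le (norm_nonneg x) (norm_nonneg y) (hlow x) (hlow y))
      (by positivity)
    _ = α / c * √⟪N x, x⟫ * √⟪N y, y⟫ := by ring

theorem exists_ne_zero_div_mul_sqrt_inner_mul_sqrt_inner_le {B : X → X → ℝ} {β c : ℝ}
    (hβ : 0 ≤ β) (hc : 0 < c) (hup : ∀ x, ⟪N x, x⟫ ≤ c * ‖x‖ ^ 2)
    (hB : ∀ x, ∃ y, y ≠ 0 ∧ β * ‖x‖ * ‖y‖ ≤ B x y) (x : X) :
    ∃ y, y ≠ 0 ∧ β / c * √⟪N x, x⟫ * √⟪N y, y⟫ ≤ B x y := by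
  obtain ⟨y, hy, hxy⟩ := hB x
  refine ⟨y, hy, ?_⟩
  calc β / c * √⟪N x, x⟫ * √⟪N y, y⟫ = β / c * (√⟪N x, x⟫ * √⟪N y, y⟫) := by ring
    _ ≤ β / c * (c * (‖x‖ * ‖y‖)) := mul_le_mul_of_nonneg_left
      (Real.sqrt_mul_sqrt_le_mul_mul hc.le (norm_nonneg x) (norm_nonneg y) (hup x) (hup y))
      (by positivity)
    _ = β * ‖x‖ * ‖y‖ := by field_simp
    _ ≤ B x y := hxy

theorem sqrt_inner_apply_le_of_abs_le {B : X → X → ℝ} {T : X → X} {C : ℝ}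
    (hN : ∀ x, 0 ≤ ⟪N x, x⟫) (hT : ∀ x y, ⟪N (T x), y⟫ = B x y) (hC : 0 ≤ C)
    (hB : ∀ x y, |B x y| ≤ C * √⟪N x, x⟫ * √⟪N y, y⟫) (x : X) :
    √⟪N (T x), T x⟫ ≤ C * √⟪N x, x⟫ := by
  have hsq : √⟪N (T x), T x⟫ * √⟪N (T x), T x⟫ ≤ C * √⟪N x, x⟫ * √⟪N (T x), T x⟫ :=
    calc √⟪N (T x), T x⟫ * √⟪N (T x), T x⟫ = B x (T x) := by rw [Real.mul_self_sqrt (hN _), hT]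
      _ ≤ |B x (T x)| := le_abs_self _
      _ ≤ C * √⟪N x, x⟫ * √⟪N (T x), T x⟫ := hB x (T x)
  rcases (Real.sqrt_nonneg ⟪N (T x), T x⟫).eq_or_lt with hzero | hpos
  · rw [← hzero]
    positivity
  · exact le_of_mul_le_mul_right hsq hpos

theorem sqrt_inner_le_inv_mul_sqrt_inner_apply {B : X → X → ℝ} {T : X → X} {γ : ℝ}
    (hN : N.IsPositive) (hNpos : ∀ y, y ≠ 0 → 0 < ⟪N y, y⟫)
    (hT : ∀ x y, ⟪N (T x), y⟫ = B x y) (hγ : 0 < γ)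
    (hB : ∀ x, ∃ y, y ≠ 0 ∧ γ * √⟪N x, x⟫ * √⟪N y, y⟫ ≤ B x y) (x : X) :
    √⟪N x, x⟫ ≤ γ⁻¹ * √⟪N (T x), T x⟫ := by
  obtain ⟨y, hy, hxy⟩ := hB x
  rw [le_inv_mul_iff₀ hγ]
  refine le_of_mul_le_mul_right ?_ (Real.sqrt_pos.2 (hNpos y hy))
  calc γ * √⟪N x, x⟫ * √⟪N y, y⟫ ≤ B x y := hxy
    _ = ⟪N (T x), y⟫ := (hT x y).symm
    _ ≤ √⟪N (T x), T x⟫ * √⟪N y, y⟫ := hN.inner_apply_le_sqrt_mul_sqrt (T x) y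

end EnergyNorm

theorem stmt_9_general {X : Type*}
    [NormedAddCommGroup X] [InnerProductSpace ℝ X]
    (N : X →ₗ[ℝ] X)
    (hNsym : ∀ x y : X, ⟪N x, y⟫ = ⟪x, N y⟫)
    (c₁ c₂ : ℝ) (hc₁ : 0 < c₁) (hc₁₂ : c₁ ≤ c₂)
    (hnorm : ∀ x : X, c₁ * ‖x‖ ^ 2 ≤ ⟪N x, x⟫ ∧ ⟪N x, x⟫ ≤ c₂ * ‖x‖ ^ 2)
    (L : X →ₗ[ℝ] X →ₗ[ℝ] ℝ)
    (α β : ℝ) (hα : 0 < α) (hβ : 0 < β)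
    (hcont : ∀ x y : X, |L x y| ≤ α * ‖x‖ * ‖y‖)
    (hinfsup : ∀ x : X, ∃ y : X, y ≠ 0 ∧ β * ‖x‖ * ‖y‖ ≤ L x y)
    (T : X →ₗ[ℝ] X) (hT : ∀ x y : X, ⟪N (T x), y⟫ = L x y) :
    (∀ x y : X, |L x y| ≤ (α / c₁) * Real.sqrt ⟪N x, x⟫ * Real.sqrt ⟪N y, y⟫) ∧
    (∀ x : X, ∃ y : X, y ≠ 0 ∧
      (β / c₂) * Real.sqrt ⟪N x, x⟫ * Real.sqrt ⟪N y, y⟫ ≤ L x y) ∧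
    (∃ C₁ C₂ : ℝ, 0 < C₁ ∧ 0 < C₂ ∧ C₁ * C₂ ≤ c₂ * α / (c₁ * β) ∧
      (∀ x : X, Real.sqrt ⟪N (T x), T x⟫ ≤ C₁ * Real.sqrt ⟪N x, x⟫) ∧
      (∀ x : X, Real.sqrt ⟪N x, x⟫ ≤ C₂ * Real.sqrt ⟪N (T x), T x⟫)) := by
  have hc₂ : 0 < c₂ := hc₁.trans_le hc₁₂
  have hNnonneg : ∀ x, 0 ≤ ⟪N x, x⟫ := fun x =>
    (by positivity : 0 ≤ c₁ * ‖x‖ ^ 2).trans (hnorm x).1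
  have hNpos : ∀ x, x ≠ 0 → 0 < ⟪N x, x⟫ := fun x hx =>
    (mul_pos hc₁ (pow_pos (norm_pos_iff.2 hx) 2)).trans_le (hnorm x).1
  have hN : N.IsPositive := (N.isPositive_iff).2 ⟨hNsym, hNnonneg⟩
  have hcontN := abs_le_div_mul_sqrt_inner_mul_sqrt_inner hα.le hc₁ (fun x => (hnorm x).1) hcont
  have hinfsupN := exists_ne_zero_div_mul_sqrt_inner_mul_sqrt_inner_le hβ.le hc₂
    (fun x => (hnorm x).2) hinfsup
  refine ⟨hcontN, hinfsupN, α / c₁, (β / c₂)⁻¹, by positivity, by positivity, ?_,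
    sqrt_inner_apply_le_of_abs_le hNnonneg hT (by positivity) hcontN,
    sqrt_inner_le_inv_mul_sqrt_inner_apply hN hNpos hT (by positivity) hinfsupN⟩
  rw [inv_div, div_mul_div_comm, mul_comm α]

/-- Norm-equivalent preconditioning: the `M⁻¹`-inner product is realized by the
SPD operator `N` (i.e. `(x,y)_{M⁻¹} = ⟪N x, y⟫`) and is norm-equivalent to the
`X`-norm with constants `c₁, c₂`.  If `L` is continuous (constant `α`) and
satisfies the symmetric inf-sup condition (constant `β`) in the `X`-norm, then
`L` is continuous and inf-sup stable with respect to the `M⁻¹`-norm (with the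
appropriately rescaled constants), and the preconditioned operator `T = MA`,
characterized by `⟪N (T x), y⟫ = L x y`, has condition number at most
`c₂ α / (c₁ β)` in the `M⁻¹`-norm. -/
theorem stmt_9 {X : Type*}
    [NormedAddCommGroup X] [InnerProductSpace ℝ X] [FiniteDimensional ℝ X]
    (N : X →ₗ[ℝ] X)
    (hNsym : ∀ x y : X, ⟪N x, y⟫ = ⟪x, N y⟫)
    (hNpos : ∀ x : X, x ≠ 0 → 0 < ⟪N x, x⟫)
    (c₁ c₂ : ℝ) (hc₁ : 0 < c₁) (hc₁₂ : c₁ ≤ c₂)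
    (hnorm : ∀ x : X, c₁ * ‖x‖ ^ 2 ≤ ⟪N x, x⟫ ∧ ⟪N x, x⟫ ≤ c₂ * ‖x‖ ^ 2)
    (L : X →ₗ[ℝ] X →ₗ[ℝ] ℝ) (hLsym : ∀ x y : X, L x y = L y x)
    (α β : ℝ) (hα : 0 < α) (hβ : 0 < β)
    (hcont : ∀ x y : X, |L x y| ≤ α * ‖x‖ * ‖y‖)
    (hinfsup : ∀ x : X, ∃ y : X, y ≠ 0 ∧ β * ‖x‖ * ‖y‖ ≤ L x y)
    (T : X →ₗ[ℝ] X) (hT : ∀ x y : X, ⟪N (T x), y⟫ = L x y) :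
    (∀ x y : X, |L x y| ≤ (α / c₁) * Real.sqrt ⟪N x, x⟫ * Real.sqrt ⟪N y, y⟫) ∧
    (∀ x : X, ∃ y : X, y ≠ 0 ∧
      (β / c₂) * Real.sqrt ⟪N x, x⟫ * Real.sqrt ⟪N y, y⟫ ≤ L x y) ∧
    (∃ C₁ C₂ : ℝ, 0 < C₁ ∧ 0 < C₂ ∧ C₁ * C₂ ≤ c₂ * α / (c₁ * β) ∧
      (∀ x : X, Real.sqrt ⟪N (T x), T x⟫ ≤ C₁ * Real.sqrt ⟪N x, x⟫) ∧
      (∀ x : X, Real.sqrt ⟪N x, x⟫ ≤ C₂ * Real.sqrt ⟪N (T x), T x⟫)) :=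
  stmt_9_general N hNsym c₁ c₂ hc₁ hc₁₂ hnorm L α β hα hβ hcont hinfsup T hT
end
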